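/- If F is a positive linear map on matrices, then its induced 1-to-1 norm equals the operator (infinity) norm of F†(𝟙): ||F||_{1→1} = ||F†(𝟙)||_∞. -/

import Mathlib

noncomputable section

open Matrix ComplexOrder

abbrev Mat (d : ℕ) := Matrix (Fin d) (Fin d) ℂ

variable {d : ℕ}

open scoped MatrixOrder in
/-- Singular values of a matrix: eigenvalues of `sqrt (ρᴴ * ρ)`. -/
noncomputable def singVals (ρ : Mat d) : Fin d → ℝ :=
  (CFC.sqrt_nonneg (ρᴴ * ρ)).posSemidef.1.eigenvalues

/-- Schatten `p`-norm. -/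
noncomputable def schattenNorm (p : ℝ) (ρ : Mat d) : ℝ :=
  (∑ i, singVals ρ i ^ p) ^ (1 / p)

/-- Trace norm (Schatten 1-norm). -/
noncomputable def traceNorm (ρ : Mat d) : ℝ := schattenNorm 1 ρ

/-- Operator norm (largest singular value). -/
noncomputable def opNorm (ρ : Mat d) : ℝ := ⨆ i, singVals ρ i

/-- Induced `a → b` Schatten norm of a linear map on matrices. -/
noncomputable def inducedNorm (a b : ℝ) (F : Mat d →ₗ[ℂ] Mat d) : ℝ :=
  sSup {r : ℝ | ∃ σ : Mat d, σ ≠ 0 ∧ r = schattenNorm a (F σ) / schattenNorm b σ}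

/-- Induced 1→1 norm, maximised over Hermitian matrices. -/
noncomputable def norm11 (F : Mat d →ₗ[ℂ] Mat d) : ℝ :=
  sSup {r : ℝ | ∃ σ : Mat d, σ.IsHermitian ∧ σ ≠ 0 ∧ r = traceNorm (F σ) / traceNorm σ}

/-- Ergodicity coefficient. -/
noncomputable def ergCoeff (F : Mat d →ₗ[ℂ] Mat d) : ℝ :=
  sSup {r : ℝ | ∃ σ : Mat d, σ.IsHermitian ∧ σ.trace = 0 ∧ σ ≠ 0 ∧
    r = traceNorm (F σ) / traceNorm σ}

/-- A positive map sends positive semidefinite matrices to positive semidefinite matrices. -/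
def IsPositiveMap (F : Mat d →ₗ[ℂ] Mat d) : Prop :=
  ∀ σ : Mat d, σ.PosSemidef → (F σ).PosSemidef

def IsTracePreserving (F : Mat d →ₗ[ℂ] Mat d) : Prop :=
  ∀ σ : Mat d, (F σ).trace = σ.trace

/-- Ampliation `F ⊗ id_n` acting blockwise. -/
def ampliate (F : Mat d →ₗ[ℂ] Mat d) (n : ℕ)
    (M : Matrix (Fin d × Fin n) (Fin d × Fin n) ℂ) : Matrix (Fin d × Fin n) (Fin d × Fin n) ℂ :=
  Matrix.of fun p q => F (Matrix.of fun i j => M (i, p.2) (j, q.2)) p.1 q.1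

def IsCompletelyPositive (F : Mat d →ₗ[ℂ] Mat d) : Prop :=
  ∀ (n : ℕ) (M : Matrix (Fin d × Fin n) (Fin d × Fin n) ℂ),
    M.PosSemidef → (ampliate F n M).PosSemidef

/-- The conjugation map `ρ ↦ s * ρ * s`. -/
noncomputable def conjMap (s : Mat d) : Mat d →ₗ[ℂ] Mat d where
  toFun ρ := s * ρ * s
  map_add' x y := by simp [Matrix.mul_add, Matrix.add_mul]
  map_smul' c x := by simp [Matrix.mul_smul, Matrix.smul_mul]

/-- The projection onto the stationary state: `σ ↦ Tr(σ) • ρ∞`. -/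
noncomputable def statProj (ρinf : Mat d) : Mat d →ₗ[ℂ] Mat d where
  toFun σ := σ.trace • ρinf
  map_add' x y := by simp [Matrix.trace_add, add_smul]
  map_smul' c x := by simp [Matrix.trace_smul, smul_smul]

/-- `F` has spectral radius one. -/
def HasSpectralRadiusOne (F : Mat d →ₗ[ℂ] Mat d) : Prop :=
  IsGreatest {r : ℝ | ∃ μ ∈ spectrum ℂ (F : Module.End ℂ (Mat d)), r = ‖μ‖} 1

end

/-! For a positive map `F`, `Tr (F B) = Tr (A * B)` with `A = F†(𝟙)`, and `A` is positive
semidefinite because `F` maps rank-one projections to positive matrices. On a positive input `Q`,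
the trace norm of `F Q` is its trace `Tr (A * Q) ≤ λ Tr Q`, where `λ = ‖A‖_∞` is the largest
eigenvalue of `A`. A Hermitian `σ` splits as `σ⁺ - σ⁻` with `‖σ‖₁ = Tr σ⁺ + Tr σ⁻`, so
`‖F σ‖₁ ≤ Tr F(σ⁺) + Tr F(σ⁻) ≤ λ ‖σ‖₁`; equality holds at the projection onto a top eigenvector
of `A`. -/

open Matrix
open scoped ComplexOrder MatrixOrder

namespace Matrix

variable {n 𝕜 : Type*} [Fintype n] [RCLike 𝕜]

theorem trace_mul_vecMulVec_star (M : Matrix n n 𝕜) (v : n → 𝕜) :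
    (M * vecMulVec v (star v)).trace = star v ⬝ᵥ M *ᵥ v := by
  rw [mul_vecMulVec, trace_vecMulVec, dotProduct_comm]

-- Over `ℂ`, a nonnegative quadratic form forces the matrix to be Hermitian.
theorem posSemidef_of_forall_dotProduct_mulVec_nonneg [DecidableEq n] {A : Matrix n n ℂ}
    (h : ∀ x, 0 ≤ star x ⬝ᵥ A *ᵥ x) : A.PosSemidef := by
  refine isPositive_toEuclideanLin_iff.mp ((LinearMap.isPositive_iff_complex _).mpr fun x => ?_)
  have hx := h x.ofLp
  have hstar : star (A *ᵥ x.ofLp) ⬝ᵥ x.ofLp = star x.ofLp ⬝ᵥ A *ᵥ x.ofLp := by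
    rw [← (IsSelfAdjoint.of_nonneg hx).star_eq, star_dotProduct]
  simp only [EuclideanSpace.inner_eq_star_dotProduct, toLpLin_apply]
  rw [dotProduct_comm, hstar]
  obtain ⟨hre, him⟩ := Complex.nonneg_iff.mp hx
  exact ⟨Complex.ext (by simp) (by simp [him]), hre⟩

variable [DecidableEq n]

theorem PosSemidef.trace_mul_nonneg {A B : Matrix n n 𝕜} (hA : A.PosSemidef)
    (hB : B.PosSemidef) : 0 ≤ (A * B).trace := by
  set S := CFC.sqrt A
  have hS : Sᴴ = S := (nonneg_iff_posSemidef.mp (CFC.sqrt_nonneg A)).1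
  have hSS : S * S = A := CFC.sqrt_mul_sqrt_self A hA.nonneg
  have htrace : (A * B).trace = (Sᴴ * B * S).trace := by
    rw [hS, ← hSS, Matrix.mul_assoc, trace_mul_comm, Matrix.mul_assoc]
  rw [htrace]
  exact (hB.conjTranspose_mul_mul_same S).trace_nonneg

theorem re_trace_abs_sub_le {P N : Matrix n n 𝕜} (hP : P.PosSemidef) (hN : N.PosSemidef) :
    RCLike.re (CFC.abs (P - N)).trace ≤ RCLike.re P.trace + RCLike.re N.trace := by
  set H := P - N
  have hH : IsSelfAdjoint H := hP.1.sub hN.1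
  have hsign : ∀ x : ℝ, |(SignType.sign x : ℝ)| ≤ 1 := fun x => by
    rcases lt_trichotomy x 0 with h | rfl | h <;> simp [*]
  -- `S = sign H` satisfies `-1 ≤ S ≤ 1` and `S * H = |H|`, so `Tr |H| = Tr (S P) - Tr (S N)`.
  set S := cfc (fun x : ℝ => (SignType.sign x : ℝ)) H
  have hcont : ContinuousOn (fun x : ℝ => (SignType.sign x : ℝ)) (spectrum ℝ H) :=
    finite_real_spectrum.continuousOn _
  have hSH : S * H = CFC.abs H := by
    conv_lhs => rw [← cfc_id' ℝ H, ← cfc_mul _ _ H hcont]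
    rw [CFC.abs_eq_cfc_norm H]
    exact cfc_congr fun x _ => by simp
  have hS_le_one : (1 - S).PosSemidef :=
    le_iff.mp (cfc_le_one _ H fun x _ => (abs_le.mp (hsign x)).2)
  have hneg_one_le_S : (S + 1).PosSemidef := by
    simpa using le_iff.mp (algebraMap_le_cfc _ (-1 : ℝ) H (fun x _ => (abs_le.mp (hsign x)).1) hcont)
  have hP' := RCLike.nonneg_iff.mp (hS_le_one.trace_mul_nonneg hP)
  have hN' := RCLike.nonneg_iff.mp (hneg_one_le_S.trace_mul_nonneg hN)
  rw [sub_mul, one_mul, trace_sub, map_sub] at hP'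
  rw [add_mul, one_mul, trace_add, map_add] at hN'
  rw [← hSH, mul_sub, trace_sub, map_sub]
  linarith [hP'.1, hN'.1]

namespace IsHermitian

variable {A : Matrix n n 𝕜}

theorem le_iSup_eigenvalues (hA : A.IsHermitian) (i : n) :
    hA.eigenvalues i ≤ ⨆ j, hA.eigenvalues j :=
  le_ciSup (Set.finite_range _).bddAbove i

theorem re_trace_mul_le (hA : A.IsHermitian) {Q : Matrix n n 𝕜} (hQ : Q.PosSemidef) :
    RCLike.re (A * Q).trace ≤ (⨆ i, hA.eigenvalues i) * RCLike.re Q.trace := by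
  have hle : A ≤ algebraMap ℝ (Matrix n n 𝕜) (⨆ i, hA.eigenvalues i) := by
    refine le_algebraMap_of_spectrum_le fun x hx => ?_
    obtain ⟨i, rfl⟩ := hA.spectrum_real_eq_range_eigenvalues ▸ hx
    exact hA.le_iSup_eigenvalues i
  have h := RCLike.nonneg_iff.mp ((le_iff.mp hle).trace_mul_nonneg hQ)
  rw [sub_mul, trace_sub, map_sub, Algebra.algebraMap_eq_smul_one, smul_mul, one_mul,
    trace_smul, RCLike.smul_re] at h
  linarith [h.1]

theorem trace_vecMulVec_eigenvector (hA : A.IsHermitian) (i : n) :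
    (vecMulVec ⇑(hA.eigenvectorBasis i) (star ⇑(hA.eigenvectorBasis i))).trace = 1 := by
  rw [trace_vecMulVec, ← EuclideanSpace.inner_eq_star_dotProduct, inner_self_eq_norm_sq_to_K,
    hA.eigenvectorBasis.orthonormal.1 i, RCLike.ofReal_one, one_pow]

theorem re_trace_mul_vecMulVec_eigenvector (hA : A.IsHermitian) (i : n) :
    RCLike.re (A * vecMulVec ⇑(hA.eigenvectorBasis i) (star ⇑(hA.eigenvectorBasis i))).trace
      = hA.eigenvalues i := by
  rw [trace_mul_vecMulVec_star, hA.eigenvalues_eq]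

end IsHermitian

end Matrix

variable {d : ℕ}

theorem traceNorm_eq_sum_singVals (ρ : Mat d) : traceNorm ρ = ∑ i, singVals ρ i := by
  simp [traceNorm, schattenNorm]

theorem traceNorm_eq_re_trace_abs (ρ : Mat d) : traceNorm ρ = (CFC.abs ρ).trace.re := by
  have h : (CFC.abs ρ).IsHermitian := (nonneg_iff_posSemidef.mp (CFC.abs_nonneg ρ)).1
  rw [h.trace_eq_sum_eigenvalues, traceNorm_eq_sum_singVals]
  simp only [Complex.re_sum]
  rfl

theorem traceNorm_of_posSemidef {ρ : Mat d} (hρ : ρ.PosSemidef) : traceNorm ρ = ρ.trace.re := by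
  rw [traceNorm_eq_re_trace_abs, CFC.abs_of_nonneg ρ hρ.nonneg]

theorem traceNorm_pos {ρ : Mat d} (hρ : ρ ≠ 0) : 0 < traceNorm ρ := by
  have habs : (CFC.abs ρ).PosSemidef := nonneg_iff_posSemidef.mp (CFC.abs_nonneg ρ)
  obtain ⟨hre, him⟩ := Complex.nonneg_iff.mp habs.trace_nonneg
  rw [traceNorm_eq_re_trace_abs]
  refine lt_of_le_of_ne hre fun h => hρ ?_
  have habs_eq : CFC.abs ρ = 0 := habs.trace_eq_zero_iff.mp (Complex.ext h.symm him.symm)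
  have hmul := CFC.abs_mul_abs ρ
  rw [habs_eq, zero_mul] at hmul
  exact conjTranspose_mul_self_eq_zero.mp hmul.symm

theorem traceNorm_eq_re_trace_posPart_add_negPart {σ : Mat d} (hσ : σ.IsHermitian) :
    traceNorm σ = σ⁺.trace.re + σ⁻.trace.re := by
  rw [traceNorm_eq_re_trace_abs, ← CFC.posPart_add_negPart σ hσ, trace_add, Complex.add_re]

theorem opNorm_of_posSemidef {A : Mat d} (hA : A.PosSemidef) :
    opNorm A = ⨆ i, hA.1.eigenvalues i := by
  have hsqrt : CFC.sqrt (Aᴴ * A) = A := by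
    rw [hA.1.eq]
    exact CFC.sqrt_mul_self A hA.nonneg
  unfold opNorm singVals
  congr!

namespace IsPositiveMap

variable {F : Mat d →ₗ[ℂ] Mat d} {A : Mat d}

theorem posSemidef_of_trace_apply_eq (hF : IsPositiveMap F)
    (hA : ∀ B, (F B).trace = (A * B).trace) : A.PosSemidef :=
  posSemidef_of_forall_dotProduct_mulVec_nonneg fun x => by
    rw [← trace_mul_vecMulVec_star, ← hA]
    exact (hF _ (posSemidef_vecMulVec_self_star x)).trace_nonneg

theorem traceNorm_apply_le (hF : IsPositiveMap F) (hA : ∀ B, (F B).trace = (A * B).trace)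
    {σ : Mat d} (hσ : σ.IsHermitian) : traceNorm (F σ) ≤ opNorm A * traceNorm σ := by
  have hApsd := hF.posSemidef_of_trace_apply_eq hA
  have hpos := (CFC.posPart_nonneg σ).posSemidef
  have hneg := (CFC.negPart_nonneg σ).posSemidef
  calc traceNorm (F σ) = (CFC.abs (F σ⁺ - F σ⁻)).trace.re := by
        rw [traceNorm_eq_re_trace_abs, ← map_sub, CFC.posPart_sub_negPart σ hσ]
    _ ≤ (F σ⁺).trace.re + (F σ⁻).trace.re := re_trace_abs_sub_le (hF _ hpos) (hF _ hneg)
    _ = (A * σ⁺).trace.re + (A * σ⁻).trace.re := by rw [hA, hA]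
    _ ≤ opNorm A * σ⁺.trace.re + opNorm A * σ⁻.trace.re := by
        rw [opNorm_of_posSemidef hApsd]
        exact add_le_add (hApsd.1.re_trace_mul_le hpos) (hApsd.1.re_trace_mul_le hneg)
    _ = opNorm A * traceNorm σ := by
        rw [traceNorm_eq_re_trace_posPart_add_negPart hσ, mul_add]

theorem exists_traceNorm_apply_eq [Nonempty (Fin d)] (hF : IsPositiveMap F)
    (hA : ∀ B, (F B).trace = (A * B).trace) :
    ∃ σ : Mat d, σ.PosSemidef ∧ traceNorm σ = 1 ∧ traceNorm (F σ) = opNorm A := by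
  have hApsd := hF.posSemidef_of_trace_apply_eq hA
  obtain ⟨i, hi⟩ := Finite.exists_max hApsd.1.eigenvalues
  set v := ⇑(hApsd.1.eigenvectorBasis i)
  have hσ := posSemidef_vecMulVec_self_star v
  refine ⟨vecMulVec v (star v), hσ, ?_, ?_⟩
  · rw [traceNorm_of_posSemidef hσ, hApsd.1.trace_vecMulVec_eigenvector, Complex.one_re]
  · rw [traceNorm_of_posSemidef (hF _ hσ), hA, opNorm_of_posSemidef hApsd]
    refine (hApsd.1.re_trace_mul_vecMulVec_eigenvector i).trans ?_
    exact le_antisymm (hApsd.1.le_iSup_eigenvalues i) (ciSup_le hi)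

end IsPositiveMap

/-- STATEMENT 2: for a positive map, `‖F‖_{1→1} = ‖F†(𝟙)‖_∞`. -/
theorem norm11_eq_opNorm_adjoint_one {d : ℕ} (F Fd : Mat d →ₗ[ℂ] Mat d)
    (hF : IsPositiveMap F)
    (hadj : ∀ A B : Mat d, (A * F B).trace = (Fd A * B).trace) :
    norm11 F = opNorm (Fd 1) := by
  have htr : ∀ B, (F B).trace = (Fd 1 * B).trace := fun B => by simpa using hadj 1 B
  rcases isEmpty_or_nonempty (Fin d) with hd | hd
  · have hempty : {r : ℝ | ∃ σ : Mat d, σ.IsHermitian ∧ σ ≠ 0 ∧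
        r = traceNorm (F σ) / traceNorm σ} = ∅ :=
      Set.eq_empty_of_forall_notMem fun r ⟨σ, _, hσ, _⟩ => hσ (Subsingleton.elim σ 0)
    rw [norm11, hempty, Real.sSup_empty, opNorm, Real.iSup_of_isEmpty]
  obtain ⟨σ, hσ, hσ1, hFσ⟩ := hF.exists_traceNorm_apply_eq htr
  refine IsGreatest.csSup_eq ⟨⟨σ, hσ.1, ?_, by rw [hFσ, hσ1, div_one]⟩, ?_⟩
  · rintro rfl
    simp [traceNorm_of_posSemidef hσ] at hσ1
  · rintro r ⟨τ, hτ, hτ0, rfl⟩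
    exact (div_le_iff₀ (traceNorm_pos hτ0)).mpr (hF.traceNorm_apply_le htr hτ)
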